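/- Suppose there exist C > 0 and ρ > 0 such that for every n ≥ 1 the closed absolutely convex hull acx(Φ(Ω)) admits an (n, C·n^{−ρ−1/2})-cover. Let β ∈ [0,∞), γ ∈ (0,1], f ∈ H, and let (x_i)_{i≥1} be a weak β-greedy sequence for f with parameter γ. Then for every m ≥ 2: min_{1 ≤ i ≤ m} ‖r_i‖_∞ ≤ (C·√5·4^{ρ+β/2})^{1/max(1,β)} · γ^{−1} · (m^{−ρ − β/2})^{1/max(1,β)} · ‖f‖_H. -/

import Mathlib

open scoped RealInnerProductSpace

variable {H : Type*} [NormedAddCommGroup H] [InnerProductSpace ℝ H] {Ω : Type*}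

/-- The kernel interpolant `I_X f`: the orthogonal projection of `f` onto
`V(X) = span {Φ(x) : x ∈ X}`. -/
noncomputable def interp (Φ : Ω → H) (X : Finset Ω) (f : H) : H :=
  haveI : FiniteDimensional ℝ (Submodule.span ℝ (Φ '' (X : Set Ω))) :=
    FiniteDimensional.span_of_finite ℝ (X.finite_toSet.image Φ)
  (Submodule.orthogonalProjectionOnto (Submodule.span ℝ (Φ '' (X : Set Ω))) f : H)

/-- The power function `P_X(z) = ‖Φ(z) − Π_{V(X)} Φ(z)‖`. -/
noncomputable def powerFun (Φ : Ω → H) (X : Finset Ω) (z : Ω) : ℝ :=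
  ‖Φ z - interp Φ X (Φ z)‖

/-- The sup norm `‖g‖_∞ = sup_{x ∈ Ω} |g(x)|`, where `g(x) = ⟪g, Φ(x)⟫`. -/
noncomputable def supNorm (Φ : Ω → H) (g : H) : ℝ := ⨆ x : Ω, |⟪g, Φ x⟫|

/-- `X_i = {x_1, …, x_i}` (so `X_0 = ∅`). -/
noncomputable def Xset (x : ℕ → Ω) (i : ℕ) : Finset Ω := by
  classical exact (Finset.Icc 1 i).image x

/-- `(x_i)_{i ≥ 1}` is a weak β-greedy sequence for `f` with parameter `γ`:
for every `i ≥ 0` and `z ∈ Ω`,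
`γ · |r_i(z)|^β · P_{X_i}(z)^{1−β} ≤ |r_i(x_{i+1})|^β · P_{X_i}(x_{i+1})^{1−β}`,
where `r_i = f − I_{X_i} f`. -/
def IsWeakGreedy (Φ : Ω → H) (f : H) (β γ : ℝ) (x : ℕ → Ω) : Prop :=
  ∀ (i : ℕ) (z : Ω),
    γ * |⟪f - interp Φ (Xset x i) f, Φ z⟫| ^ β * powerFun Φ (Xset x i) z ^ (1 - β)
      ≤ |⟪f - interp Φ (Xset x i) f, Φ (x (i + 1))⟫| ^ β
          * powerFun Φ (Xset x i) (x (i + 1)) ^ (1 - β)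

/-- The closed absolutely convex (symmetric convex) hull of `K`. -/
def acx (K : Set H) : Set H :=
  closure {y : H | ∃ (m : ℕ) (c : Fin m → ℝ) (g : Fin m → H),
    (∀ j, g j ∈ K) ∧ (∑ j, |c j|) ≤ 1 ∧ y = ∑ j, c j • g j}

/-- `S` admits an `(n, ε)`-cover: it can be covered by at most `2^n` closed balls of
radius `ε`. -/
def HasCover (S : Set H) (n : ℕ) (ε : ℝ) : Prop :=
  ∃ (q : ℕ) (y : Fin q → H), q ≤ 2 ^ n ∧ S ⊆ ⋃ j, Metric.closedBall (y j) ε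

/-!
Adding `x_{k+1}` to the interpolation set lowers `‖r_k‖²` by at least
`(r_k(x_{k+1}) / P_{X_k}(x_{k+1}))²`, so over the steps `k = 1, …, m` these ratios have square
sum at most `‖f‖²`, and by AM–GM their product is at most `(‖f‖ / √m)^m`. The power functions
`P_{X_k}(x_{k+1})` are dominated by the Gram–Schmidt norms of `Φ(x₂), …, Φ(x_{m+1})`, whose
product is the volume distortion of a linear map sending a Euclidean ball into `acx(Φ(Ω))`;
comparing volumes with the `2^m` balls of radius `C m^{-ρ-1/2}` covering `acx(Φ(Ω))` bounds
that product by `(2 C m^{-ρ})^m`. So the geometric mean of the greedy scores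
`|r_k(x_{k+1})|^β P_{X_k}(x_{k+1})^{1-β}` is at most `2 C m^{-ρ-β/2} ‖f‖^β`, and at a step `k`
where the score is that small, the weak greedy rule together with `|r_k(z)| ≤ ‖f‖ P_{X_k}(z)`
and `P_{X_k} ≤ 1` bounds `|r_k(z)|` for every `z`.
-/

open Finset Metric MeasureTheory InnerProductSpace

theorem prod_le_sum_div_card_pow {ι : Type*} (s : Finset ι) {z : ι → ℝ} (hz : ∀ i ∈ s, 0 ≤ z i) :
    ∏ i ∈ s, z i ≤ ((∑ i ∈ s, z i) / #s) ^ #s := by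
  rcases s.eq_empty_or_nonempty with rfl | hs
  · simp
  have hcard : (0 : ℝ) < #s := by exact_mod_cast hs.card_pos
  have hamgm := Real.geom_mean_le_arith_mean_weighted s (fun _ => (#s : ℝ)⁻¹) z
    (fun _ _ => by positivity) (by simp [hcard.ne']) hz
  rw [Real.finsetProd_rpow s z hz, ← mul_sum, inv_mul_eq_div] at hamgm
  calc ∏ i ∈ s, z i = ((∏ i ∈ s, z i) ^ (#s : ℝ)⁻¹) ^ #s := by
        rw [← Real.rpow_natCast, ← Real.rpow_mul (prod_nonneg hz), inv_mul_cancel₀ hcard.ne',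
          Real.rpow_one]
    _ ≤ _ := pow_le_pow_left₀ (Real.rpow_nonneg (prod_nonneg hz) _) hamgm _

theorem exists_le_of_prod_le_pow {ι : Type*} {s : Finset ι} (hs : s.Nonempty) {f : ι → ℝ}
    (hf : ∀ i ∈ s, 0 ≤ f i) {T : ℝ} (hT : 0 ≤ T) (h : ∏ i ∈ s, f i ≤ T ^ #s) :
    ∃ i ∈ s, f i ≤ T := by
  obtain ⟨i, hi, hmin⟩ := s.exists_min_image f hs
  refine ⟨i, hi, le_of_pow_le_pow_left₀ hs.card_pos.ne' hT ?_⟩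
  calc f i ^ #s = ∏ _j ∈ s, f i := (prod_const _).symm
    _ ≤ ∏ j ∈ s, f j := prod_le_prod (fun _ _ => hf i hi) hmin
    _ ≤ T ^ #s := h

theorem rpow_mul_rpow_one_sub_eq {u p : ℝ} (β : ℝ) (hu : 0 ≤ u) (hp : 0 ≤ p)
    (hup : p = 0 → u = 0) : u ^ β * p ^ (1 - β) = (u / p) ^ β * p := by
  rcases hp.eq_or_lt with rfl | hp
  · rw [hup rfl]
    rcases eq_or_ne β 0 with rfl | hβ
    · simp
    · simp [Real.zero_rpow hβ]
  · rw [Real.div_rpow hu hp.le, Real.rpow_sub hp, Real.rpow_one]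
    field_simp

theorem rpow_max_one_le {u p F β Q : ℝ} (hu : 0 ≤ u) (hp : 0 ≤ p) (hp1 : p ≤ 1)
    (hF : 0 ≤ F) (hup : u ≤ F * p) (hQ : u ^ β * p ^ (1 - β) ≤ Q) :
    u ^ max 1 β ≤ Q * F ^ (max 1 β - β) := by
  rcases le_total β 1 with hβ1 | hβ1
  · rw [max_eq_left hβ1, Real.rpow_one]
    calc u = u ^ β * u ^ (1 - β) := by
          rw [← Real.rpow_add' hu (by norm_num), add_sub_cancel, Real.rpow_one]
      _ ≤ u ^ β * (F * p) ^ (1 - β) := by gcongr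
      _ = u ^ β * p ^ (1 - β) * F ^ (1 - β) := by rw [Real.mul_rpow hF hp]; ring
      _ ≤ Q * F ^ (1 - β) := by gcongr
  · rw [max_eq_right hβ1, sub_self, Real.rpow_zero, mul_one]
    rcases hp.eq_or_lt with rfl | hp0
    · have hu0 : u = 0 := le_antisymm (by simpa using hup) hu
      rw [hu0, Real.zero_rpow (by linarith)]
      exact le_trans (by positivity) hQ
    · calc u ^ β = u ^ β * p ^ (1 - β) * p ^ (β - 1) := by
            rw [mul_assoc, ← Real.rpow_add hp0]
            simp
        _ ≤ u ^ β * p ^ (1 - β) * 1 := by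
            gcongr
            exact Real.rpow_le_one hp hp1 (by linarith)
        _ ≤ Q := by rwa [mul_one]

theorem sum_abs_le_sqrt_card_mul_norm {ι : Type*} [Fintype ι] (c : EuclideanSpace ℝ ι) :
    ∑ i, |c i| ≤ √(Fintype.card ι) * ‖c‖ := by
  rw [EuclideanSpace.norm_eq, ← Real.sqrt_mul (Nat.cast_nonneg _)]
  refine Real.le_sqrt_of_sq_le ?_
  simpa [Real.norm_eq_abs, sq_abs] using sq_sum_le_card_mul_sum_sq (s := univ) (f := fun i => |c i|)

theorem abs_det_mul_pow_le_of_image_closedBall_subset {E : Type*} [NormedAddCommGroup E]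
    [NormedSpace ℝ E] [FiniteDimensional ℝ E] (L : E →ₗ[ℝ] E) {r ε : ℝ} (hr : 0 ≤ r) (hε : 0 ≤ ε)
    {q : ℕ} (y : Fin q → E) (h : L '' closedBall 0 r ⊆ ⋃ j, closedBall (y j) ε) :
    |LinearMap.det L| * r ^ Module.finrank ℝ E ≤ q * ε ^ Module.finrank ℝ E := by
  borelize E
  set μ : Measure E := Measure.addHaar
  set B := μ (ball 0 1)
  have hvol : ENNReal.ofReal (|LinearMap.det L| * r ^ Module.finrank ℝ E) * B ≤
      ENNReal.ofReal (q * ε ^ Module.finrank ℝ E) * B := by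
    calc _ = μ (L '' closedBall 0 r) := by
          rw [Measure.addHaar_image_linearMap, Measure.addHaar_closedBall
            μ 0 hr, ENNReal.ofReal_mul (abs_nonneg _), mul_assoc]
      _ ≤ μ (⋃ j, closedBall (y j) ε) := measure_mono h
      _ ≤ ∑ j, μ (closedBall (y j) ε) := measure_iUnion_fintype_le μ _
      _ = _ := by
          simp [Measure.addHaar_closedBall μ _ hε, B, mul_assoc]
  exact (ENNReal.ofReal_le_ofReal_iff (by positivity)).1
    ((ENNReal.mul_le_mul_iff_left (measure_ball_pos μ 0 one_pos).ne' measure_ball_lt_top.ne).1 hvol)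

theorem HasCover.nonneg {E : Type*} [NormedAddCommGroup E] {S : Set E} {n : ℕ} {ε : ℝ}
    (h : HasCover S n ε) (hS : S.Nonempty) :
    0 ≤ ε := by
  obtain ⟨q, y, -, hSy⟩ := h
  obtain ⟨s, hs⟩ := hS
  obtain ⟨j, hj⟩ := Set.mem_iUnion.1 (hSy hs)
  exact dist_nonneg.trans hj

theorem Orthonormal.dist_toLp_inner_le {ι : Type*} [Fintype ι] {e : ι → H} (he : Orthonormal ℝ e)
    (u v : H) :
    dist (WithLp.toLp 2 fun i => ⟪e i, u⟫) (WithLp.toLp 2 fun i => ⟪e i, v⟫ : EuclideanSpace ℝ ι) ≤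
      dist u v := by
  rw [EuclideanSpace.dist_eq, dist_eq_norm, ← Real.sqrt_sq (norm_nonneg (u - v))]
  refine Real.sqrt_le_sqrt ?_
  simpa [Real.dist_eq, ← inner_sub_right] using he.sum_inner_products_le (u - v) (s := univ)

section Projection

variable {K L : Submodule ℝ H} [K.HasOrthogonalProjection] [L.HasOrthogonalProjection]

theorem norm_sub_starProjection_le (v : H) {w : H} (hw : w ∈ K) :
    ‖v - K.starProjection v‖ ≤ ‖v - w‖ :=
  (K.starProjection_minimal v).trans_le
    (ciInf_le ⟨0, Set.forall_mem_range.2 fun _ => norm_nonneg _⟩ (⟨w, hw⟩ : K))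

/-- If `w ∈ K` the subtracted term is `_ / 0 = 0`. -/
theorem norm_sub_starProjection_sq_le_of_le (hKL : K ≤ L) {w : H} (hw : w ∈ L) (v : H) :
    ‖v - L.starProjection v‖ ^ 2 ≤
      ‖v - K.starProjection v‖ ^ 2 -
        (⟪v - K.starProjection v, w⟫ / ‖w - K.starProjection w‖) ^ 2 := by
  set r := v - K.starProjection v
  set e := w - K.starProjection w
  have hre : ⟪r, e⟫ = ⟪r, w⟫ := by
    rw [inner_sub_right, K.starProjection_inner_eq_zero v _ (K.starProjection_apply_mem w),
      sub_zero]
  set c := ⟪r, w⟫ / ‖e‖ ^ 2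
  have hmem : K.starProjection v + c • e ∈ L :=
    L.add_mem (hKL (K.starProjection_apply_mem v))
      (L.smul_mem c (L.sub_mem hw (hKL (K.starProjection_apply_mem w))))
  calc ‖v - L.starProjection v‖ ^ 2 ≤ ‖v - (K.starProjection v + c • e)‖ ^ 2 := by
        gcongr; exact norm_sub_starProjection_le v hmem
    _ = ‖r‖ ^ 2 - 2 * c * ⟪r, e⟫ + c ^ 2 * ‖e‖ ^ 2 := by
        rw [← sub_sub, norm_sub_sq_real,
          real_inner_smul_right, norm_smul, Real.norm_eq_abs, mul_pow, sq_abs]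
        ring
    _ = ‖r‖ ^ 2 - (⟪r, w⟫ / ‖e‖) ^ 2 := by
        rw [hre]
        rcases eq_or_ne ‖e‖ 0 with he | he
        · simp [c, he]
        · simp only [c]
          field_simp
          ring

end Projection

section GramSchmidt

variable {ι : Type*} [LinearOrder ι] [LocallyFiniteOrderBot ι] [WellFoundedLT ι]

theorem sub_gramSchmidt_mem_span (g : ι → H) (i : ι) :
    g i - gramSchmidt ℝ g i ∈ Submodule.span ℝ (g '' Set.Iio i) := by
  rw [← span_gramSchmidt_Iio ℝ g i, gramSchmidt_def ℝ g i, sub_sub_cancel]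
  refine Submodule.sum_mem _ fun k hk => ?_
  rw [Submodule.starProjection_singleton]
  exact Submodule.smul_mem _ _ (Submodule.subset_span ⟨k, mem_Iio.1 hk, rfl⟩)

theorem inner_gramSchmidt_self (g : ι → H) (i : ι) :
    ⟪gramSchmidt ℝ g i, g i⟫ = ‖gramSchmidt ℝ g i‖ ^ 2 := by
  conv_lhs => rw [gramSchmidt_def'' ℝ g i]
  rw [inner_add_right, real_inner_self_eq_norm_sq, add_eq_left, inner_sum]
  refine sum_eq_zero fun k hk => ?_
  rw [real_inner_smul_right, gramSchmidt_orthogonal ℝ g (mem_Iio.1 hk).ne', mul_zero]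

theorem det_inner_gramSchmidtNormed [Fintype ι] (g : ι → H) :
    (Matrix.of fun i j => ⟪gramSchmidtNormed ℝ g i, g j⟫).det = ∏ i, ‖gramSchmidt ℝ g i‖ := by
  classical
  rw [Matrix.det_of_isUpperTriangular]
  · refine prod_congr rfl fun i _ => ?_
    rw [Matrix.of_apply, gramSchmidtNormed, real_inner_smul_left, inner_gramSchmidt_self]
    rcases eq_or_ne ‖gramSchmidt ℝ g i‖ 0 with h | h
    · simp [h]
    · rw [RCLike.ofReal_real_eq_id, id]
      field_simp
  · intro i j hij
    rw [Matrix.of_apply, gramSchmidtNormed, real_inner_smul_left,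
      gramSchmidt_inv_triangular ℝ g (id hij : j < i), mul_zero]

theorem orthonormal_gramSchmidtNormed_of_ne_zero {g : ι → H} (hg : ∀ i, gramSchmidt ℝ g i ≠ 0) :
    Orthonormal ℝ (gramSchmidtNormed ℝ g) := by
  refine ⟨fun i => norm_smul_inv_norm (hg i), fun i j hij => ?_⟩
  simp [gramSchmidtNormed, real_inner_smul_left, real_inner_smul_right,
    gramSchmidt_orthogonal ℝ g hij]

/-- In the coordinates of the normalised Gram–Schmidt vectors, `c ↦ ∑ i, c i • g i` is triangular
with diagonal `‖gramSchmidt ℝ g i‖`, and it maps the Euclidean ball of radius `1 / √N`, which lies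
in the `ℓ¹` unit ball, into `K`: compare volumes. -/
theorem prod_norm_gramSchmidt_le_of_hasCover [Fintype ι] {g : ι → H} {K : Set H} {n : ℕ} {ε : ℝ}
    (hK : ∀ c : ι → ℝ, ∑ i, |c i| ≤ 1 → ∑ i, c i • g i ∈ K) (hcov : HasCover K n ε) :
    ∏ i, ‖gramSchmidt ℝ g i‖ ≤ 2 ^ n * (√(Fintype.card ι) * ε) ^ Fintype.card ι := by
  classical
  have hε : 0 ≤ ε := hcov.nonneg ⟨_, hK 0 (by simp)⟩
  obtain ⟨q, y, hq, hKy⟩ := hcov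
  rcases isEmpty_or_nonempty ι with hι | hι
  · simpa using one_le_pow₀ one_le_two
  by_cases hzero : ∃ i, gramSchmidt ℝ g i = 0
  · obtain ⟨i, hi⟩ := hzero
    rw [prod_eq_zero (mem_univ i) (by simp [hi])]
    positivity
  push Not at hzero
  set e := gramSchmidtNormed ℝ g
  set F : H → EuclideanSpace ℝ ι := fun v => WithLp.toLp 2 fun i => ⟪e i, v⟫
  set L := Matrix.toEuclideanLin (Matrix.of fun i j => ⟪e i, g j⟫)
  have hL : ∀ c, L c = F (∑ j, c j • g j) := by
    intro c
    ext i
    simp [L, F, Matrix.mulVec, dotProduct, inner_sum, real_inner_smul_right, mul_comm]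
  have hdet : LinearMap.det L = ∏ i, ‖gramSchmidt ℝ g i‖ := by
    simp only [L]
    rw [Matrix.toEuclideanLin_eq_toLin_orthonormal, LinearMap.det_toLin,
      det_inner_gramSchmidtNormed]
  set N := Fintype.card ι
  have hN : 0 < √(N : ℝ) := Real.sqrt_pos.2 (by exact_mod_cast Fintype.card_pos)
  have hsub : L '' closedBall 0 (√N)⁻¹ ⊆ ⋃ j, closedBall (F (y j)) ε := by
    rintro _ ⟨c, hc, rfl⟩
    have hc1 : ∑ i, |c i| ≤ 1 := by
      refine (sum_abs_le_sqrt_card_mul_norm c).trans ?_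
      rw [mem_closedBall_zero_iff] at hc
      calc √N * ‖c‖ ≤ √N * (√N)⁻¹ := by gcongr
        _ = 1 := mul_inv_cancel₀ hN.ne'
    obtain ⟨j, hj⟩ := Set.mem_iUnion.1 (hKy (hK _ hc1))
    refine Set.mem_iUnion.2 ⟨j, ?_⟩
    rw [mem_closedBall, hL]
    exact ((orthonormal_gramSchmidtNormed_of_ne_zero hzero).dist_toLp_inner_le _ _).trans hj
  have hvol := abs_det_mul_pow_le_of_image_closedBall_subset L (by positivity) hε _ hsub
  rw [finrank_euclideanSpace, hdet, abs_of_nonneg (by positivity)] at hvol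
  calc ∏ i, ‖gramSchmidt ℝ g i‖ = (∏ i, ‖gramSchmidt ℝ g i‖) * (√N)⁻¹ ^ N * √N ^ N := by
        rw [mul_assoc, ← mul_pow, inv_mul_cancel₀ hN.ne', one_pow, mul_one]
    _ ≤ q * ε ^ N * √N ^ N := by gcongr
    _ ≤ 2 ^ n * (√N * ε) ^ N := by
        rw [mul_pow, mul_comm (√N ^ N), ← mul_assoc]
        gcongr
        exact_mod_cast hq

end GramSchmidt

section Interpolation

variable (Φ : Ω → H)

/-- `interp Φ X` is definitionally `(featureSpan Φ X).starProjection`; the proofs below use this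
freely. -/
abbrev featureSpan (X : Finset Ω) : Submodule ℝ H := Submodule.span ℝ (Φ '' X)

instance (X : Finset Ω) : FiniteDimensional ℝ (featureSpan Φ X) :=
  FiniteDimensional.span_of_finite ℝ (X.finite_toSet.image Φ)

theorem featureSpan_mono {X Y : Finset Ω} (h : X ⊆ Y) : featureSpan Φ X ≤ featureSpan Φ Y :=
  Submodule.span_mono (Set.image_mono (coe_subset.2 h))

theorem norm_sub_interp_le_norm (X : Finset Ω) (f : H) : ‖f - interp Φ X f‖ ≤ ‖f‖ :=
  (norm_sub_starProjection_le f (featureSpan Φ X).zero_mem).trans_eq (by rw [sub_zero])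

theorem abs_inner_sub_interp_le (X : Finset Ω) (f : H) (z : Ω) :
    |⟪f - interp Φ X f, Φ z⟫| ≤ ‖f - interp Φ X f‖ * powerFun Φ X z := by
  have h0 : ⟪f - interp Φ X f, interp Φ X (Φ z)⟫ = 0 :=
    Submodule.starProjection_inner_eq_zero _ _ (Submodule.starProjection_apply_mem _ _)
  rw [← sub_zero ⟪_, Φ z⟫, ← h0, ← inner_sub_right]
  exact abs_real_inner_le_norm _ _

theorem powerFun_nonneg (X : Finset Ω) (z : Ω) : 0 ≤ powerFun Φ X z :=
  norm_nonneg _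

theorem powerFun_le_one (hΦ : ∀ z, ‖Φ z‖ ≤ 1) (X : Finset Ω) (z : Ω) : powerFun Φ X z ≤ 1 :=
  (norm_sub_interp_le_norm Φ X (Φ z)).trans (hΦ z)

theorem norm_sub_interp_sq_le {X Y : Finset Ω} (hXY : X ⊆ Y) {z : Ω} (hz : z ∈ Y) (f : H) :
    ‖f - interp Φ Y f‖ ^ 2 ≤
      ‖f - interp Φ X f‖ ^ 2 - (⟪f - interp Φ X f, Φ z⟫ / powerFun Φ X z) ^ 2 :=
  norm_sub_starProjection_sq_le_of_le (featureSpan_mono Φ hXY)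
    (Submodule.subset_span ⟨z, hz, rfl⟩) f

theorem norm_sub_interp_le_norm_gramSchmidt {ι : Type*} [LinearOrder ι]
    [LocallyFiniteOrderBot ι] [WellFoundedLT ι] {X : Finset Ω} {g : ι → H} {i : ι}
    (hg : g '' Set.Iio i ⊆ Φ '' X) : ‖g i - interp Φ X (g i)‖ ≤ ‖gramSchmidt ℝ g i‖ := by
  have hmem : g i - gramSchmidt ℝ g i ∈ featureSpan Φ X :=
    Submodule.span_le.2 (hg.trans Submodule.subset_span) (sub_gramSchmidt_mem_span g i)
  exact (norm_sub_starProjection_le (g i) hmem).trans_eq (by rw [sub_sub_cancel])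

end Interpolation

section Residuals

variable (Φ : Ω → H) (f : H) (x : ℕ → Ω)

theorem Xset_mono {i j : ℕ} (h : i ≤ j) : Xset x i ⊆ Xset x j := by
  classical
  simp only [Xset]
  exact image_subset_image (Icc_subset_Icc_right h)

theorem mem_Xset {k i : ℕ} (h1 : 1 ≤ k) (h2 : k ≤ i) : x k ∈ Xset x i := by
  classical
  simp only [Xset]
  exact mem_image_of_mem x (mem_Icc.2 ⟨h1, h2⟩)

theorem sq_div_powerFun_le_norm_sq_sub_norm_sq (k : ℕ) :
    (⟪f - interp Φ (Xset x k) f, Φ (x (k + 1))⟫ / powerFun Φ (Xset x k) (x (k + 1))) ^ 2 ≤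
      ‖f - interp Φ (Xset x k) f‖ ^ 2 - ‖f - interp Φ (Xset x (k + 1)) f‖ ^ 2 := by
  have := norm_sub_interp_sq_le Φ (Xset_mono x k.le_succ) (mem_Xset x k.succ_pos le_rfl) f
  linarith

theorem sum_sq_div_powerFun_le_norm_sq (m : ℕ) :
    ∑ j : Fin m, (⟪f - interp Φ (Xset x (j + 1)) f, Φ (x (j + 2))⟫ /
      powerFun Φ (Xset x (j + 1)) (x (j + 2))) ^ 2 ≤ ‖f‖ ^ 2 := by
  rw [Fin.sum_univ_eq_sum_range (fun j => (⟪f - interp Φ (Xset x (j + 1)) f, Φ (x (j + 2))⟫ /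
      powerFun Φ (Xset x (j + 1)) (x (j + 2))) ^ 2)]
  calc _ ≤ ∑ j ∈ range m,
        (‖f - interp Φ (Xset x (j + 1)) f‖ ^ 2 - ‖f - interp Φ (Xset x (j + 1 + 1)) f‖ ^ 2) :=
        sum_le_sum fun j _ => sq_div_powerFun_le_norm_sq_sub_norm_sq Φ f x (j + 1)
    _ = ‖f - interp Φ (Xset x 1) f‖ ^ 2 - ‖f - interp Φ (Xset x (m + 1)) f‖ ^ 2 :=
        sum_range_sub' (fun j => ‖f - interp Φ (Xset x (j + 1)) f‖ ^ 2) m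
    _ ≤ ‖f‖ ^ 2 := (sub_le_self _ (sq_nonneg _)).trans
        (pow_le_pow_left₀ (norm_nonneg _) (norm_sub_interp_le_norm Φ _ f) 2)

theorem prod_powerFun_le {n : ℕ} {ε : ℝ} (hcov : HasCover (acx (Set.range Φ)) n ε) (m : ℕ) :
    ∏ j : Fin m, powerFun Φ (Xset x (j + 1)) (x (j + 2)) ≤ 2 ^ n * (√m * ε) ^ m := by
  set g : Fin m → H := fun j => Φ (x (j + 2))
  have hK : ∀ c : Fin m → ℝ, ∑ j, |c j| ≤ 1 → ∑ j, c j • g j ∈ acx (Set.range Φ) :=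
    fun c hc => subset_closure ⟨m, c, g, fun j => ⟨_, rfl⟩, hc, rfl⟩
  have hP : ∀ j : Fin m, powerFun Φ (Xset x (j + 1)) (x (j + 2)) ≤ ‖gramSchmidt ℝ g j‖ := by
    refine fun j => norm_sub_interp_le_norm_gramSchmidt Φ (g := g) (i := j) ?_
    rintro _ ⟨i, hi, rfl⟩
    exact ⟨_, mem_Xset x (by omega) (by simp only [Set.mem_Iio] at hi; omega), rfl⟩
  calc _ ≤ ∏ j, ‖gramSchmidt ℝ g j‖ := prod_le_prod (fun _ _ => norm_nonneg _) fun j _ => hP j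
    _ ≤ _ := by simpa using prod_norm_gramSchmidt_le_of_hasCover hK hcov

end Residuals

section GreedyScore

variable (Φ : Ω → H) (f : H) (x : ℕ → Ω) {β : ℝ}

noncomputable def greedyScore (β : ℝ) (X : Finset Ω) (z : Ω) : ℝ :=
  |⟪f - interp Φ X f, Φ z⟫| ^ β * powerFun Φ X z ^ (1 - β)

theorem greedyScore_nonneg (X : Finset Ω) (z : Ω) : 0 ≤ greedyScore Φ f β X z :=
  mul_nonneg (Real.rpow_nonneg (abs_nonneg _) _) (Real.rpow_nonneg (powerFun_nonneg Φ X z) _)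

theorem greedyScore_eq (X : Finset Ω) (z : Ω) :
    greedyScore Φ f β X z =
      (|⟪f - interp Φ X f, Φ z⟫| / powerFun Φ X z) ^ β * powerFun Φ X z :=
  rpow_mul_rpow_one_sub_eq β (abs_nonneg _) (powerFun_nonneg Φ X z) fun h =>
    le_antisymm (by simpa [h] using abs_inner_sub_interp_le Φ X f z) (abs_nonneg _)

theorem prod_abs_div_powerFun_le (m : ℕ) :
    ∏ j : Fin m, |⟪f - interp Φ (Xset x (j + 1)) f, Φ (x (j + 2))⟫| /
      powerFun Φ (Xset x (j + 1)) (x (j + 2)) ≤ (‖f‖ / √m) ^ m := by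
  set a : Fin m → ℝ := fun j => |⟪f - interp Φ (Xset x (j + 1)) f, Φ (x (j + 2))⟫| /
    powerFun Φ (Xset x (j + 1)) (x (j + 2))
  have ha : ∀ j, 0 ≤ a j := fun j => div_nonneg (abs_nonneg _) (powerFun_nonneg Φ _ _)
  refine (pow_le_pow_iff_left₀ (prod_nonneg fun j _ => ha j) (by positivity) two_ne_zero).1 ?_
  calc (∏ j, a j) ^ 2 = ∏ j, a j ^ 2 := (prod_pow _ _ _).symm
    _ ≤ ((∑ j, a j ^ 2) / m) ^ m := by
        simpa using prod_le_sum_div_card_pow univ fun j _ => sq_nonneg (a j)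
    _ ≤ (‖f‖ ^ 2 / m) ^ m := by
        gcongr
        simpa [a, div_pow, sq_abs] using sum_sq_div_powerFun_le_norm_sq Φ f x m
    _ = ((‖f‖ / √m) ^ 2) ^ m := by rw [div_pow ‖f‖, Real.sq_sqrt (Nat.cast_nonneg _)]
    _ = ((‖f‖ / √m) ^ m) ^ 2 := by rw [← pow_mul, ← pow_mul, mul_comm]

theorem prod_greedyScore_le (hβ : 0 ≤ β) {n : ℕ} {ε : ℝ}
    (hcov : HasCover (acx (Set.range Φ)) n ε) (m : ℕ) :
    ∏ j : Fin m, greedyScore Φ f β (Xset x (j + 1)) (x (j + 2)) ≤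
      2 ^ n * ((‖f‖ / √m) ^ β * (√m * ε)) ^ m := by
  simp_rw [greedyScore_eq]
  rw [prod_mul_distrib,
    Real.finsetProd_rpow _ _ fun j _ => div_nonneg (abs_nonneg _) (powerFun_nonneg Φ _ _),
    mul_pow, Real.rpow_pow_comm (by positivity), mul_left_comm]
  gcongr
  · exact prod_nonneg fun j _ => powerFun_nonneg Φ _ _
  · exact prod_nonneg fun j _ => div_nonneg (abs_nonneg _) (powerFun_nonneg Φ _ _)
  · exact prod_abs_div_powerFun_le Φ f x m
  · exact prod_powerFun_le Φ x hcov m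


theorem exists_greedyScore_le {C ρ : ℝ} (hC : 0 ≤ C) (hβ : 0 ≤ β) {m : ℕ} (hm : 0 < m)
    (hcov : HasCover (acx (Set.range Φ)) m (C * (m : ℝ) ^ (-ρ - 1 / 2))) :
    ∃ j : Fin m, greedyScore Φ f β (Xset x (j + 1)) (x (j + 2)) ≤
      2 * C * (m : ℝ) ^ (-ρ - β / 2) * ‖f‖ ^ β := by
  have hmR : (0 : ℝ) < m := by exact_mod_cast hm
  have hrate : (m : ℝ) ^ (-ρ - β / 2) = √m * (m : ℝ) ^ (-ρ - 1 / 2) / √m ^ β := by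
    rw [Real.sqrt_eq_rpow, ← Real.rpow_mul hmR.le, ← Real.rpow_add hmR, ← Real.rpow_sub hmR]
    ring_nf
  have hT : 2 ^ m * ((‖f‖ / √m) ^ β * (√m * (C * (m : ℝ) ^ (-ρ - 1 / 2)))) ^ m =
      (2 * C * (m : ℝ) ^ (-ρ - β / 2) * ‖f‖ ^ β) ^ m := by
    rw [← mul_pow, hrate, Real.div_rpow (norm_nonneg f) (Real.sqrt_nonneg _)]
    field_simp
  have : NeZero m := ⟨hm.ne'⟩
  obtain ⟨j, -, hj⟩ := exists_le_of_prod_le_pow univ_nonempty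
    (f := fun j : Fin m => greedyScore Φ f β (Xset x (j + 1)) (x (j + 2)))
    (T := 2 * C * (m : ℝ) ^ (-ρ - β / 2) * ‖f‖ ^ β) (fun j _ => greedyScore_nonneg Φ f _ _)
    (by positivity)
    (by simpa only [card_univ, Fintype.card_fin, hT] using prod_greedyScore_le Φ f x hβ hcov m)
  exact ⟨j, hj⟩

theorem abs_inner_sub_interp_le_of_greedyScore_le {γ : ℝ} (hΦ : ∀ z, ‖Φ z‖ ≤ 1)
    (hγ0 : 0 < γ) (hγ1 : γ ≤ 1) (hx : IsWeakGreedy Φ f β γ x) {k : ℕ} {a : ℝ} (ha : 0 ≤ a)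
    (hk : greedyScore Φ f β (Xset x k) (x (k + 1)) ≤ a * ‖f‖ ^ β) (z : Ω) :
    |⟪f - interp Φ (Xset x k) f, Φ z⟫| ≤ γ⁻¹ * a ^ (1 / max 1 β) * ‖f‖ := by
  set s := max 1 β
  have hs : 0 < s := one_pos.trans_le (le_max_left 1 β)
  set u := |⟪f - interp Φ (Xset x k) f, Φ z⟫|
  have hscore : u ^ β * powerFun Φ (Xset x k) z ^ (1 - β) ≤ γ⁻¹ * a * ‖f‖ ^ β := by
    rw [mul_assoc, le_inv_mul_iff₀ hγ0, ← mul_assoc]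
    exact (hx k z).trans hk
  have hup : u ≤ ‖f‖ * powerFun Φ (Xset x k) z :=
    (abs_inner_sub_interp_le Φ _ f z).trans
      (by gcongr; exacts [powerFun_nonneg Φ _ _, norm_sub_interp_le_norm Φ _ f])
  have hus : u ^ s ≤ γ⁻¹ * a * ‖f‖ ^ s := by
    have := rpow_max_one_le (abs_nonneg _) (powerFun_nonneg Φ _ _) (powerFun_le_one Φ hΦ _ _)
      (norm_nonneg f) hup hscore
    rwa [mul_assoc, ← Real.rpow_add' (norm_nonneg f) (by simpa using hs.ne'),
      add_sub_cancel] at this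
  calc u = (u ^ s) ^ (1 / s) := by
        rw [← Real.rpow_mul (abs_nonneg _), mul_one_div_cancel hs.ne', Real.rpow_one]
    _ ≤ (γ⁻¹ * a * ‖f‖ ^ s) ^ (1 / s) := by gcongr
    _ = γ⁻¹ ^ (1 / s) * a ^ (1 / s) * ‖f‖ := by
        rw [Real.mul_rpow (by positivity) (by positivity), Real.mul_rpow (by positivity) ha,
          ← Real.rpow_mul (norm_nonneg f), mul_one_div_cancel hs.ne', Real.rpow_one]
    _ ≤ γ⁻¹ * a ^ (1 / s) * ‖f‖ := by
        gcongr
        exact Real.rpow_le_self_of_one_le ((one_le_inv₀ hγ0).2 hγ1)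
          ((div_le_one hs).2 (le_max_left 1 β))

end GreedyScore

theorem statement_8
    (Φ : Ω → H) (hΦ : ∀ z : Ω, ‖Φ z‖ ≤ 1)
    (C ρ : ℝ) (hC : 0 < C) (hρ : 0 < ρ)
    (hcov : ∀ n : ℕ, 1 ≤ n →
      HasCover (acx (Set.range Φ)) n (C * (n : ℝ) ^ (-ρ - 1 / 2)))
    (β γ : ℝ) (hβ : 0 ≤ β) (hγ0 : 0 < γ) (hγ1 : γ ≤ 1)
    (f : H) (x : ℕ → Ω) (hx : IsWeakGreedy Φ f β γ x) :
    ∀ m : ℕ, ∀ hm : 2 ≤ m,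
      (Finset.Icc 1 m).inf' (Finset.nonempty_Icc.mpr (by omega))
          (fun i => supNorm Φ (f - interp Φ (Xset x i) f))
        ≤ (C * Real.sqrt 5 * (4 : ℝ) ^ (ρ + β / 2)) ^ (1 / max 1 β) * γ⁻¹
            * ((m : ℝ) ^ (-ρ - β / 2)) ^ (1 / max 1 β) * ‖f‖ := by
  intro m hm
  set A := C * √5 * (4 : ℝ) ^ (ρ + β / 2)
  set M := (m : ℝ) ^ (-ρ - β / 2)
  obtain ⟨j, hj⟩ := exists_greedyScore_le Φ f x hC.le hβ (by omega) (hcov m (by omega))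
  have hk : (j : ℕ) + 1 ∈ Icc 1 m := mem_Icc.2 ⟨by omega, by omega⟩
  have hA : 2 * C ≤ A := by
    have h5 : (2 : ℝ) ≤ √5 := (Real.le_sqrt zero_le_two (by norm_num)).2 (by norm_num)
    have h4 : (1 : ℝ) ≤ 4 ^ (ρ + β / 2) := Real.one_le_rpow (by norm_num) (by positivity)
    have : (2 : ℝ) ≤ √5 * 4 ^ (ρ + β / 2) := by nlinarith
    simp only [A]
    nlinarith
  calc _ ≤ supNorm Φ (f - interp Φ (Xset x (j + 1)) f) :=
        inf'_le (fun i => supNorm Φ (f - interp Φ (Xset x i) f)) hk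
    _ ≤ γ⁻¹ * (2 * C * M) ^ (1 / max 1 β) * ‖f‖ :=
        Real.iSup_le (abs_inner_sub_interp_le_of_greedyScore_le Φ f x hΦ hγ0 hγ1 hx
          (by positivity) hj) (by positivity)
    _ ≤ γ⁻¹ * (A * M) ^ (1 / max 1 β) * ‖f‖ := by gcongr
    _ = A ^ (1 / max 1 β) * γ⁻¹ * M ^ (1 / max 1 β) * ‖f‖ := by
        rw [Real.mul_rpow (by positivity) (by positivity)]
        ring
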